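/- Every quasi-subterm of a normalized term is normalized: if s ∈ sub(⌈t⌉) then s = ⌈s⌉. -/

import Mathlib

inductive BinOp : Type
  | enc | aenc | pair | sig
deriving DecidableEq

inductive Term : Type
  | atom : ℕ → Term
  | var  : ℕ → Term
  | bin  : BinOp → Term → Term → Term
  | priv : Term → Term
  | aci  : List Term → Term

def Term.subst (σ : ℕ → Term) : Term → Term
  | .atom a => .atom a
  | .var x => σ x
  | .bin o p q => .bin o (p.subst σ) (q.subst σ)
  | .priv t => .priv (t.subst σ)
  | .aci L => .aci (L.attach.map fun p => p.1.subst σ)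
decreasing_by
  all_goals simp_wf
  all_goals first
    | omega
    | (have := List.sizeOf_lt_of_mem p.2; omega)

def Term.elems : Term → Set Term
  | .aci L => ⋃ p ∈ L.attach, p.1.elems
  | t => {t}
decreasing_by
  have := List.sizeOf_lt_of_mem p.2; simp_wf; omega

def Term.subDag : Term → Set Term
  | .atom a => {.atom a}
  | .var x => {.var x}
  | .bin o p q => insert (.bin o p q) (p.subDag ∪ q.subDag)
  | .priv t => insert (.priv t) t.subDag
  | .aci L => insert (.aci L) (⋃ p ∈ L.attach, p.1.subDag)
decreasing_by
  all_goals simp_wf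
  all_goals first
    | omega
    | (have := List.sizeOf_lt_of_mem p.2; omega)

def Term.vars (t : Term) : Set ℕ := {x | Term.var x ∈ t.subDag}

def Term.Ground (t : Term) : Prop := t.vars = ∅

/-- Specification of the quasi-subterm function `sub`. -/
structure SubSpec where
  sub : Term → Set Term
  sub_atom : ∀ a, sub (.atom a) = {.atom a}
  sub_var : ∀ x, sub (.var x) = {.var x}
  sub_priv : ∀ t, sub (.priv t) = insert (.priv t) (sub t)
  sub_bin : ∀ o p q, sub (.bin o p q) = insert (.bin o p q) (sub p ∪ sub q)
  sub_aci : ∀ L, sub (.aci L) = insert (.aci L) (⋃ p ∈ (Term.aci L).elems, sub p)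

/-- Specification of the ACI normal form with respect to a strict total order `lt`. -/
structure NormSpec (lt : Term → Term → Prop) where
  nf : Term → Term
  nf_atom : ∀ a, nf (.atom a) = .atom a
  nf_var  : ∀ x, nf (.var x) = .var x
  nf_bin  : ∀ o p q, nf (.bin o p q) = .bin o (nf p) (nf q)
  nf_priv : ∀ t, nf (.priv t) = .priv (nf t)
  nf_aci_single : ∀ L t', nf '' (Term.aci L).elems = {t'} → nf (.aci L) = t'
  nf_aci : ∀ L, (¬ ∃ t', nf '' (Term.aci L).elems = {t'}) →
      ∃ L' : List Term, List.Pairwise lt L' ∧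
        (∀ s, s ∈ L' ↔ s ∈ nf '' (Term.aci L).elems) ∧ nf (.aci L) = .aci L'

/-- The derivable closure of a set `E` of terms under a deduction system `R`,
given as a set of rules (premises, conclusion): the least superset of `E`
closed under the rules. -/
inductive Der (R : Set (Set Term × Term)) (E : Set Term) : Term → Prop where
  | base {t : Term} : t ∈ E → Der R E t
  | step {l : Set Term} {r : Term} : (l, r) ∈ R → (∀ s ∈ l, Der R E s) → Der R E r

/-- The composition rules of the DY+ACI deduction system (for normal form `nf`). -/
inductive DYComp (nf : Term → Term) : Set Term → Term → Prop where
  | enc  (t₁ t₂ : Term) : DYComp nf {t₁, t₂} (nf (.bin .enc t₁ t₂))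
  | aenc (t₁ t₂ : Term) : DYComp nf {t₁, t₂} (nf (.bin .aenc t₁ t₂))
  | pair (t₁ t₂ : Term) : DYComp nf {t₁, t₂} (nf (.bin .pair t₁ t₂))
  | sig  (t₁ t₂ : Term) : DYComp nf {t₁, .priv t₂} (nf (.bin .sig t₁ (.priv t₂)))
  | aci  (L : List Term) (h : L ≠ []) : DYComp nf {t | t ∈ L} (nf (.aci L))

/-- The composition rules of DY+ACI other than the ACI-set construction rule. -/
inductive DYCompNoACI (nf : Term → Term) : Set Term → Term → Prop where
  | enc  (t₁ t₂ : Term) : DYCompNoACI nf {t₁, t₂} (nf (.bin .enc t₁ t₂))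
  | aenc (t₁ t₂ : Term) : DYCompNoACI nf {t₁, t₂} (nf (.bin .aenc t₁ t₂))
  | pair (t₁ t₂ : Term) : DYCompNoACI nf {t₁, t₂} (nf (.bin .pair t₁ t₂))
  | sig  (t₁ t₂ : Term) : DYCompNoACI nf {t₁, .priv t₂} (nf (.bin .sig t₁ (.priv t₂)))

/-- The decomposition rules of the DY+ACI deduction system. -/
inductive DYDecomp (nf : Term → Term) : Set Term → Term → Prop where
  | enc  (t₁ t₂ : Term) : DYDecomp nf {.bin .enc t₁ t₂, nf t₂} (nf t₁)
  | aenc (t₁ t₂ : Term) : DYDecomp nf {.bin .aenc t₁ t₂, nf (.priv t₂)} (nf t₁)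
  | fst  (t₁ t₂ : Term) : DYDecomp nf {.bin .pair t₁ t₂} (nf t₁)
  | snd  (t₁ t₂ : Term) : DYDecomp nf {.bin .pair t₁ t₂} (nf t₂)
  | aci  (L : List Term) (t : Term) (h : t ∈ L) : DYDecomp nf {.aci L} (nf t)

/-- The DY+ACI deduction system as a set of rules. -/
def DYACI (nf : Term → Term) : Set (Set Term × Term) :=
  {p | DYComp nf p.1 p.2 ∨ DYDecomp nf p.1 p.2}

/-- A ground substitution `σ` is a model of a constraint system
`S = {Eᵢ ▷ tᵢ}` if `⌈tᵢσ⌉` is derivable from `⌈Eᵢσ⌉` in DY+ACI. -/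
def Models (nf : Term → Term) (σ : ℕ → Term) (S : List (Set Term × Term)) : Prop :=
  ∀ c ∈ S, Der (DYACI nf) (nf '' ((fun t => t.subst σ) '' c.1)) (nf (c.2.subst σ))

/-- All terms occurring in a constraint system. -/
def termsOf (S : List (Set Term × Term)) : Set Term :=
  ⋃ c ∈ S, c.1 ∪ {c.2}

/-- DAG-subterms of a constraint system. -/
def subDagS (S : List (Set Term × Term)) : Set Term :=
  ⋃ t ∈ termsOf S, t.subDag

/-- Variables of a constraint system. -/
def varsS (S : List (Set Term × Term)) : Set ℕ :=
  {x | Term.var x ∈ subDagS S}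

/-- Applying a substitution to a constraint system. -/
def substS (θ : ℕ → Term) (S : List (Set Term × Term)) : List (Set Term × Term) :=
  S.map fun c => ((fun t => t.subst θ) '' c.1, c.2.subst θ)

/-- The domain of a substitution. -/
def dom (θ : ℕ → Term) : Set ℕ := {x | θ x ≠ .var x}

/-!
Normalization is idempotent: the normal form of an ACI term depends only on the set of
normalized elements, and these are fixed by `nf` by induction. Conversely, a normal ACI term
cannot arise from the singleton rule, because neither elements nor their normal forms are ACI
terms; so its list consists exactly of its elements, and they are normal. By induction every
quasi-subterm of a normal term is normal, and `⌈t⌉` is normal.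
-/

namespace Term

theorem mem_elems_aci {L : List Term} {s : Term} :
    s ∈ (aci L).elems ↔ ∃ q ∈ L, s ∈ q.elems := by
  simp [elems]

theorem elems_of_ne_aci {t : Term} (h : ∀ M, t ≠ aci M) : t.elems = {t} := by
  cases t with
  | aci L => exact absurd rfl (h L)
  | _ => simp [elems]

theorem ne_aci_of_mem_elems {t s : Term} (hs : s ∈ t.elems) : ∀ M, s ≠ aci M := by
  induction t using elems.induct with
  | case1 L ih =>
    obtain ⟨q, hq, hsq⟩ := mem_elems_aci.mp hs
    exact ih ⟨q, hq⟩ hsq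
  | case2 t ht =>
    rw [elems_of_ne_aci ht, Set.mem_singleton_iff] at hs
    exact hs ▸ ht

theorem elems_aci_of_forall_ne_aci {L : List Term} (hL : ∀ p ∈ L, ∀ M, p ≠ aci M) :
    (aci L).elems = {p | p ∈ L} := by
  ext s
  simp only [mem_elems_aci, Set.mem_ofPred_eq]
  constructor
  · rintro ⟨q, hq, hsq⟩
    rw [elems_of_ne_aci (hL q hq), Set.mem_singleton_iff] at hsq
    exact hsq ▸ hq
  · intro hs
    exact ⟨s, hs, by rw [elems_of_ne_aci (hL s hs)]; rfl⟩

theorem sizeOf_le_of_mem_elems {t s : Term} (hs : s ∈ t.elems) : sizeOf s ≤ sizeOf t := by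
  induction t using elems.induct with
  | case1 L ih =>
    obtain ⟨q, hq, hsq⟩ := mem_elems_aci.mp hs
    have := List.sizeOf_lt_of_mem hq
    have : sizeOf s ≤ sizeOf q := ih ⟨q, hq⟩ hsq
    simp only [aci.sizeOf_spec]
    omega
  | case2 t ht =>
    rw [elems_of_ne_aci ht, Set.mem_singleton_iff] at hs
    exact hs ▸ le_rfl

theorem sizeOf_lt_of_mem_elems_aci {L : List Term} {s : Term} (hs : s ∈ (aci L).elems) :
    sizeOf s < sizeOf (aci L) := by
  obtain ⟨q, hq, hsq⟩ := mem_elems_aci.mp hs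
  have := List.sizeOf_lt_of_mem hq
  have := sizeOf_le_of_mem_elems hsq
  simp only [aci.sizeOf_spec]
  omega

@[elab_as_elim]
theorem elems_induction {motive : Term → Prop}
    (atom : ∀ a, motive (atom a)) (var : ∀ x, motive (var x))
    (bin : ∀ o p q, motive p → motive q → motive (bin o p q))
    (priv : ∀ t, motive t → motive (priv t))
    (aci : ∀ L, (∀ p ∈ (aci L).elems, motive p) → motive (aci L)) (t : Term) : motive t :=
  match t with
  | .atom a => atom a
  | .var x => var x
  | .bin o p q => bin o p q (elems_induction atom var bin priv aci p)
      (elems_induction atom var bin priv aci q)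
  | .priv t => priv t (elems_induction atom var bin priv aci t)
  | .aci L => aci L fun p _ => elems_induction atom var bin priv aci p
termination_by sizeOf t
decreasing_by
  · simp only [Term.bin.sizeOf_spec]; omega
  · simp only [Term.bin.sizeOf_spec]; omega
  · simp only [Term.priv.sizeOf_spec]; omega
  · exact sizeOf_lt_of_mem_elems_aci ‹_›

end Term

namespace NormSpec

variable {lt : Term → Term → Prop} (N : NormSpec lt)

theorem nf_ne_aci {t : Term} (h : ∀ M, t ≠ .aci M) : ∀ M, N.nf t ≠ .aci M := by
  cases t with
  | aci L => exact absurd rfl (h L)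
  | atom => simp [N.nf_atom]
  | var => simp [N.nf_var]
  | bin => simp [N.nf_bin]
  | priv => simp [N.nf_priv]

-- A duplicate-free sorted list is determined by its members.
theorem nf_aci_congr [IsStrictOrder Term lt] {L₁ L₂ : List Term}
    (h : N.nf '' (Term.aci L₁).elems = N.nf '' (Term.aci L₂).elems) :
    N.nf (.aci L₁) = N.nf (.aci L₂) := by
  by_cases hsing : ∃ t', N.nf '' (Term.aci L₁).elems = {t'}
  · obtain ⟨t', ht'⟩ := hsing
    rw [N.nf_aci_single L₁ t' ht', N.nf_aci_single L₂ t' (h ▸ ht')]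
  · obtain ⟨L₁', hs₁, hm₁, he₁⟩ := N.nf_aci L₁ hsing
    obtain ⟨L₂', hs₂, hm₂, he₂⟩ := N.nf_aci L₂ (h ▸ hsing)
    rw [he₁, he₂, hs₁.eq_of_mem_iff hs₂ fun s => by rw [hm₁, hm₂, h]]

theorem elems_eq_image_of_nf_aci_eq {L L' : List Term} (he : N.nf (.aci L) = .aci L') :
    (Term.aci L').elems = N.nf '' (Term.aci L).elems := by
  by_cases hsing : ∃ t', N.nf '' (Term.aci L).elems = {t'}
  · obtain ⟨t', ht'⟩ := hsing
    obtain ⟨q, hq, rfl⟩ : t' ∈ N.nf '' (Term.aci L).elems := ht' ▸ rfl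
    rw [N.nf_aci_single L _ ht'] at he
    exact absurd he (N.nf_ne_aci (Term.ne_aci_of_mem_elems hq) L')
  · obtain ⟨L'', -, hmem, he'⟩ := N.nf_aci L hsing
    obtain rfl : L'' = L' := Term.aci.inj (he'.symm.trans he)
    rw [Term.elems_aci_of_forall_ne_aci fun p hp => by
      obtain ⟨q, hq, rfl⟩ := (hmem p).mp hp
      exact N.nf_ne_aci (Term.ne_aci_of_mem_elems hq)]
    exact Set.ext hmem

theorem nf_nf [IsStrictOrder Term lt] (t : Term) : N.nf (N.nf t) = N.nf t := by
  induction t using Term.elems_induction with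
  | atom a => rw [N.nf_atom, N.nf_atom]
  | var x => rw [N.nf_var, N.nf_var]
  | bin o p q ihp ihq => rw [N.nf_bin, N.nf_bin, ihp, ihq]
  | priv t ih => rw [N.nf_priv, N.nf_priv, ih]
  | aci L ih =>
    by_cases hsing : ∃ t', N.nf '' (Term.aci L).elems = {t'}
    · obtain ⟨t', ht'⟩ := hsing
      obtain ⟨q, hq, rfl⟩ : t' ∈ N.nf '' (Term.aci L).elems := ht' ▸ rfl
      rw [N.nf_aci_single L _ ht', ih q hq]
    · obtain ⟨L', -, -, he⟩ := N.nf_aci L hsing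
      have himage : N.nf '' (Term.aci L').elems = N.nf '' (Term.aci L).elems := by
        rw [N.elems_eq_image_of_nf_aci_eq he, Set.image_image]
        exact Set.image_congr ih
      rw [he, N.nf_aci_congr himage, he]

theorem nf_eq_self_of_mem_elems [IsStrictOrder Term lt] {L : List Term}
    (hL : N.nf (.aci L) = .aci L) {p : Term} (hp : p ∈ (Term.aci L).elems) : N.nf p = p := by
  rw [N.elems_eq_image_of_nf_aci_eq hL] at hp
  obtain ⟨q, -, rfl⟩ := hp
  exact N.nf_nf q

end NormSpec

theorem SubSpec.nf_eq_self_of_mem_sub {lt : Term → Term → Prop} [IsStrictOrder Term lt]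
    (Sp : SubSpec) (N : NormSpec lt) {u s : Term} (hu : N.nf u = u) (hs : s ∈ Sp.sub u) :
    N.nf s = s := by
  induction u using Term.elems_induction with
  | atom a =>
    rw [Sp.sub_atom, Set.mem_singleton_iff] at hs
    exact hs ▸ hu
  | var x =>
    rw [Sp.sub_var, Set.mem_singleton_iff] at hs
    exact hs ▸ hu
  | bin o p q ihp ihq =>
    obtain ⟨hp, hq⟩ : N.nf p = p ∧ N.nf q = q := by simpa [N.nf_bin] using hu
    rw [Sp.sub_bin] at hs
    rcases hs with rfl | hs | hs
    exacts [hu, ihp hp hs, ihq hq hs]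
  | priv t ih =>
    rw [Sp.sub_priv] at hs
    rcases hs with rfl | hs
    exacts [hu, ih (by simpa [N.nf_priv] using hu) hs]
  | aci L ih =>
    rw [Sp.sub_aci] at hs
    rcases hs with rfl | hs
    · exact hu
    · obtain ⟨p, hp, hs⟩ := Set.mem_iUnion₂.mp hs
      exact ih p hp (N.nf_eq_self_of_mem_elems hu hp) hs

/-- Every quasi-subterm of a normalized term is normalized. -/
theorem sub_norm_normalized (lt : Term → Term → Prop) (hlt : IsStrictTotalOrder Term lt)
    (N : NormSpec lt) (Sp : SubSpec) :
    ∀ t s : Term, s ∈ Sp.sub (N.nf t) → s = N.nf s :=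
  fun t _ hs => (Sp.nf_eq_self_of_mem_sub N (N.nf_nf t) hs).symm
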